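/- The symmetry-breaking boundary β_FS(γ) := d − 2 − sqrt((γ−d)² − 4(d−1)) satisfies: for γ < 0 and d ≥ 2, the condition β ≤ β_FS(γ) (with γ−2 < β < (d−2)γ/d) is equivalent to α ≤ α_FS := sqrt((d−1)/(n−1)), where α = 1 + (β−γ)/2 and n = 2(d−γ)/(β+2−γ). -/
import Mathlib


/-- For γ < 0, d ≥ 2 and γ−2 < β < (d−2)γ/d, the condition β ≤ β_FS(γ) is equivalent
to α ≤ α_FS = sqrt((d−1)/(n−1)), with α = 1+(β−γ)/2 and n = 2(d−γ)/(β+2−γ). -/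
theorem felli_schneider_equivalence (d : ℕ) (hd : 2 ≤ d) (γ β : ℝ)
    (hγ : γ < 0) (hβ1 : γ - 2 < β) (hβ2 : β < ((d : ℝ) - 2) * γ / d)
    (α n βFS αFS : ℝ)
    (hα : α = 1 + (β - γ) / 2)
    (hn : n = 2 * ((d : ℝ) - γ) / (β + 2 - γ))
    (hβFS : βFS = (d : ℝ) - 2 - Real.sqrt ((γ - d)^2 - 4 * ((d : ℝ) - 1)))
    (hαFS : αFS = Real.sqrt (((d : ℝ) - 1) / (n - 1))) :
    β ≤ βFS ↔ α ≤ αFS := by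
  have hd2 : (2:ℝ) ≤ (d:ℝ) := by exact_mod_cast hd
  have hdpos : (0:ℝ) < (d:ℝ) := by linarith
  have hβ0 : β < 0 := by
    have h := (lt_div_iff₀ hdpos).mp hβ2
    nlinarith
  have hs : 0 < β + 2 - γ := by linarith
  have ht : 0 < 2*(d:ℝ) - γ - β - 2 := by linarith
  have hD : 0 ≤ (γ - (d:ℝ))^2 - 4 * ((d:ℝ) - 1) := by
    nlinarith [sq_nonneg ((d:ℝ) - 2), mul_pos (neg_pos.2 hγ) hdpos]
  have hn1 : n - 1 = (2*(d:ℝ) - γ - β - 2) / (β + 2 - γ) := by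
    rw [hn]; field_simp; ring
  have hαpos : 0 < α := by rw [hα]; linarith
  have hc : 0 < (d:ℝ) - 2 - β := by linarith
  have key : (α ≤ αFS) ↔ α^2 * (2*(d:ℝ) - γ - β - 2) ≤ ((d:ℝ) - 1) * (β + 2 - γ) := by
    rw [hαFS, Real.le_sqrt' hαpos, hn1, div_div_eq_mul_div, le_div_iff₀ ht]
  constructor
  · intro h
    rw [hβFS] at h
    have h1 : Real.sqrt ((γ - (d:ℝ))^2 - 4 * ((d:ℝ) - 1)) ≤ (d:ℝ) - 2 - β := by linarith
    have h2 : (γ - (d:ℝ))^2 - 4 * ((d:ℝ) - 1) ≤ ((d:ℝ) - 2 - β)^2 := by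
      nlinarith [Real.sq_sqrt hD, Real.sqrt_nonneg ((γ - (d:ℝ))^2 - 4 * ((d:ℝ) - 1))]
    rw [key, hα]
    nlinarith
  · intro h
    rw [key, hα] at h
    have h2 : (γ - (d:ℝ))^2 - 4 * ((d:ℝ) - 1) ≤ ((d:ℝ) - 2 - β)^2 := by nlinarith
    have h3 : Real.sqrt ((γ - (d:ℝ))^2 - 4 * ((d:ℝ) - 1)) ≤ (d:ℝ) - 2 - β := by
      calc Real.sqrt ((γ - (d:ℝ))^2 - 4 * ((d:ℝ) - 1)) ≤ Real.sqrt (((d:ℝ) - 2 - β)^2) :=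
            Real.sqrt_le_sqrt h2
        _ = (d:ℝ) - 2 - β := Real.sqrt_sq hc.le
    rw [hβFS]; linarith
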